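/- Let G be a connected leafless graph of Betti number 2. Then #Aut(G) ≤ 12. -/

import Mathlib

/-- A finite undirected multigraph (allowing loops and multiple edges) on a vertex type `V`
and an edge type `E`: the map `ends` assigns to each edge its unordered pair of endpoints
(a loop is an edge whose two endpoints coincide).  This is the same data as an incidence
map `ε : E → 2^V` taking values in subsets of cardinality 1 or 2. -/
structure Multigraph (V E : Type) where
  ends : E → Sym2 V

namespace Multigraph

variable {V E : Type} (G : Multigraph V E)

/-- An automorphism of a multigraph: a pair of bijections on vertices and edges
commuting with the incidence map. -/
structure Aut (G : Multigraph V E) where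
  toV : Equiv.Perm V
  toE : Equiv.Perm E
  ends_map : ∀ e, G.ends (toE e) = Sym2.map toV (G.ends e)

/-- Degree of the vertex `v` with respect to the edge set `F` (loops counted twice):
the number of edges of `F` incident to `v`, plus the number of loops of `F` at `v`. -/
noncomputable def degIn (F : Set E) (v : V) : ℕ :=
  {e ∈ F | v ∈ G.ends e}.ncard + {e ∈ F | G.ends e = s(v, v)}.ncard

/-- Degree of a vertex (loops counted twice). -/
noncomputable def degree (v : V) : ℕ := G.degIn Set.univ v

/-- A graph is leafless if every vertex has degree at least two. -/
def Leafless : Prop := ∀ v, 2 ≤ G.degree v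

/-- Adjacency: there is an edge with endpoints `u`, `v`. -/
def Adj (u v : V) : Prop := ∃ e, G.ends e = s(u, v)

/-- A graph is connected if it is nonempty and every two vertices are joined by a walk. -/
def Connected : Prop := Nonempty V ∧ ∀ u v : V, Relation.ReflTransGen G.Adj u v

/-- Adjacency using only edges outside the edge set `F`. -/
def AdjOff (F : Set E) (u v : V) : Prop := ∃ e, e ∉ F ∧ G.ends e = s(u, v)

/-- Adjacency in the subgraph `G ∖ {x}` obtained by deleting the vertex `x`
and all edges incident to it. -/
def AdjOffV (x : V) (u v : V) : Prop := u ≠ x ∧ v ≠ x ∧ G.Adj u v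

/-- An edge is a bridge if its endpoints are not joined by a walk avoiding it;
equivalently, its deletion increases the number of connected components. -/
def IsBridge (e : E) : Prop :=
  ∃ u v, G.ends e = s(u, v) ∧ ¬ Relation.ReflTransGen (G.AdjOff {e}) u v

end Multigraph

/-!
Call a vertex of degree at least three a branch vertex. The degrees exceed two by a total of
`2 (#E - #V) = 2`, so there is either a single branch vertex, of degree four, or two, of degree
three. The remaining vertices have degree two, so the edges split into chains (maximal trails
through vertices of degree two), and counting the edges and inner vertices of a chain shows
that it has exactly two ends at branch vertices. Hence an automorphism fixing one branch end of
a chain fixes the other one, and one fixing every edge at every branch vertex is the identity.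

It follows that, apart from the dumbbell (two branch vertices, each on a closed chain),
an automorphism is determined by where it sends a branch vertex together with two of its edges
lying on different chains: at most `∑ deg v (deg v - 1) = 12` possibilities. For the dumbbell it
is determined by the images of one edge of each closed chain, and there are at most four edges
at branch vertices on closed chains, leaving at most `4 · 3` possibilities.
-/

theorem MulAction.natCard_le_card_of_smul_mem {M X : Type*} [Group M] [MulAction M X] {x : X}
    {S : Finset X} (hS : ∀ g : M, g • x ∈ S) (hx : ∀ g : M, g • x = x → g = 1) :
    Nat.card M ≤ S.card := by
  have hinj : Function.Injective fun g : M => (⟨g • x, hS g⟩ : S) := by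
    intro g h hgh
    have : (h⁻¹ * g) • x = x := by
      rw [mul_smul, inv_smul_eq_iff]
      exact congrArg Subtype.val hgh
    exact (inv_mul_eq_one.1 (hx _ this)).symm
  simpa using Nat.card_le_card_of_injective _ hinj

theorem Sym2.sum_ite_mem_add_ite_diag_eq_two {α : Type*} [Fintype α] [DecidableEq α]
    (z : Sym2 α) :
    ∑ v, ((if v ∈ z then 1 else 0) + if z = s(v, v) then 1 else 0) = 2 := by
  induction z using Sym2.ind with
  | _ p q =>
    rw [Finset.sum_add_distrib]
    by_cases hpq : p = q
    · subst hpq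
      simp [Sym2.mem_iff, eq_comm]
    · have : ∀ v, s(p, q) ≠ s(v, v) := fun v h => hpq (by rw [Sym2.eq_iff] at h; grind)
      simp [Sym2.mem_iff, this, Finset.filter_or, Finset.filter_eq', Finset.card_pair hpq]

theorem Sym2.eq_of_not_isDiag_of_forall_mem {α : Type*} {P : α → Prop}
    (hP : ∀ x y z, P x → P y → P z → x = y ∨ x = z ∨ y = z) {s t : Sym2 α} (hs : ¬ s.IsDiag)
    (ht : ¬ t.IsDiag) (hsP : ∀ x ∈ s, P x) (htP : ∀ x ∈ t, P x) : s = t := by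
  induction s using Sym2.ind with | _ x y =>
  induction t using Sym2.ind with | _ x' y' =>
  rw [Sym2.mk_isDiag_iff] at hs ht
  have h₁ := hP x y x' (hsP x (by simp)) (hsP y (by simp)) (htP x' (by simp))
  have h₂ := hP x y y' (hsP x (by simp)) (hsP y (by simp)) (htP y' (by simp))
  rw [Sym2.eq_iff]
  grind

namespace Multigraph

open Finset Pointwise Relation
open scoped Classical

variable {V E : Type} {G : Multigraph V E}

namespace Aut

@[ext]
lemma ext {f g : G.Aut} (hV : f.toV = g.toV) (hE : f.toE = g.toE) : f = g := by
  cases f; cases g; congr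

instance : Group G.Aut where
  mul f g := ⟨f.toV * g.toV, f.toE * g.toE, fun e => by
    simp only [Equiv.Perm.mul_apply, f.ends_map, g.ends_map, Sym2.map_map]; rfl⟩
  one := ⟨1, 1, fun e => by simp⟩
  inv f := ⟨f.toV⁻¹, f.toE⁻¹, fun e => by
    conv_rhs => rw [← f.toE.apply_symm_apply e]
    rw [f.ends_map, Sym2.map_map]
    simp [Equiv.Perm.inv_def]⟩
  mul_assoc f g h := by ext <;> rfl
  one_mul f := by ext <;> rfl
  mul_one f := by ext <;> rfl
  inv_mul_cancel f := by ext x <;> apply Equiv.symm_apply_apply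

instance : MulAction G.Aut V where
  smul f v := f.toV v
  one_smul _ := rfl
  mul_smul _ _ _ := rfl

instance : MulAction G.Aut E where
  smul f e := f.toE e
  one_smul _ := rfl
  mul_smul _ _ _ := rfl

lemma ends_smul (f : G.Aut) (e : E) : G.ends (f • e) = (G.ends e).map (f • ·) :=
  f.ends_map e

lemma smul_mem_ends_smul_iff (f : G.Aut) {v : V} {e : E} :
    f • v ∈ G.ends (f • e) ↔ v ∈ G.ends e := by
  rw [ends_smul, Sym2.mem_map]
  exact ⟨fun ⟨u, hu, h⟩ => smul_left_cancel f h ▸ hu, fun h => ⟨v, h, rfl⟩⟩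

lemma ends_smul_eq_diag_iff (f : G.Aut) {v : V} {e : E} :
    G.ends (f • e) = s(f • v, f • v) ↔ G.ends e = s(v, v) := by
  rw [ends_smul, ← Sym2.map_mk]
  exact (Sym2.map.injective (MulAction.injective f)).eq_iff

end Aut

lemma degIn_smul (f : G.Aut) (F : Set E) (v : V) : G.degIn (f • F) (f • v) = G.degIn F v := by
  have key : ∀ P Q : E → Prop, (∀ e, P (f • e) ↔ Q e) →
      {e ∈ f • F | P e}.ncard = {e ∈ F | Q e}.ncard := by
    intro P Q hPQ
    rw [← Set.ncard_smul_set f {e ∈ F | Q e}]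
    congr 1
    ext e
    rw [Set.mem_smul_set_iff_inv_smul_mem, Set.mem_ofPred_eq, Set.mem_ofPred_eq,
      Set.mem_smul_set_iff_inv_smul_mem, ← hPQ, smul_inv_smul]
  unfold degIn
  rw [key _ _ fun e => f.smul_mem_ends_smul_iff, key _ _ fun e => f.ends_smul_eq_diag_iff]

lemma degree_smul (f : G.Aut) (v : V) : G.degree (f • v) = G.degree v := by
  simpa [degree] using degIn_smul f Set.univ v

variable (G) in
def IsBranch (v : V) : Prop := 3 ≤ G.degree v

lemma isBranch_smul_iff (f : G.Aut) {v : V} : G.IsBranch (f • v) ↔ G.IsBranch v := by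
  rw [IsBranch, IsBranch, degree_smul]

section Degree

lemma degIn_eq_zero {F : Set E} {v : V} (h : ∀ e ∈ F, v ∉ G.ends e) : G.degIn F v = 0 := by
  have h₁ : {e ∈ F | v ∈ G.ends e} = ∅ :=
    Set.eq_empty_of_forall_notMem fun e he => h e he.1 he.2
  have h₂ : {e ∈ F | G.ends e = s(v, v)} = ∅ :=
    Set.eq_empty_of_forall_notMem fun e he => h e he.1 (he.2 ▸ Sym2.mem_mk_left v v)
  rw [degIn, h₁, h₂, Set.ncard_empty]

variable [Finite E] {F F' : Set E} {v : V}

lemma degIn_mono (h : F ⊆ F') : G.degIn F v ≤ G.degIn F' v :=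
  add_le_add (Set.ncard_le_ncard fun e he => ⟨h he.1, he.2⟩)
    (Set.ncard_le_ncard fun e he => ⟨h he.1, he.2⟩)

lemma degIn_le_degree : G.degIn F v ≤ G.degree v :=
  degIn_mono (Set.subset_univ F)

lemma degIn_union (h : Disjoint F F') : G.degIn (F ∪ F') v = G.degIn F v + G.degIn F' v := by
  have key : ∀ P : E → Prop, {e ∈ F ∪ F' | P e} = {e ∈ F | P e} ∪ {e ∈ F' | P e} := by
    intro P; ext e; simp [or_and_right]
  have hdisj : ∀ P : E → Prop, Disjoint {e ∈ F | P e} {e ∈ F' | P e} := fun P =>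
    h.mono (fun e he => he.1) (fun e he => he.1)
  unfold degIn
  rw [key, key, Set.ncard_union_eq (hdisj _), Set.ncard_union_eq (hdisj _)]
  ring

lemma degIn_compl_add (F : Set E) : G.degIn Fᶜ v + G.degIn F v = G.degree v := by
  rw [← degIn_union disjoint_compl_left, Set.compl_union_self]
  rfl

lemma degIn_pos {e : E} (he : e ∈ F) (hv : v ∈ G.ends e) : 0 < G.degIn F v := by
  have : 0 < {e ∈ F | v ∈ G.ends e}.ncard := (Set.ncard_pos (Set.toFinite _)).2 ⟨e, he, hv⟩
  exact Nat.add_pos_left this _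

lemma degIn_eq_degree (h : ∀ e, v ∈ G.ends e → e ∈ F) : G.degIn F v = G.degree v := by
  refine le_antisymm degIn_le_degree (add_le_add (Set.ncard_le_ncard ?_) (Set.ncard_le_ncard ?_))
  · exact fun e he => ⟨h e he.2, he.2⟩
  · exact fun e he => ⟨h e (he.2 ▸ Sym2.mem_mk_left v v), he.2⟩

lemma exists_mem_ends_notMem (h : G.degIn F v < G.degree v) : ∃ e, v ∈ G.ends e ∧ e ∉ F := by
  by_contra! h'
  exact h.ne (degIn_eq_degree h')

end Degree

variable (G) in
lemma sum_degIn [Fintype V] [Fintype E] (F : Set E) : ∑ v, G.degIn F v = 2 * F.ncard := by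
  have hdeg : ∀ v, G.degIn F v = ∑ e ∈ F.toFinset,
      ((if v ∈ G.ends e then 1 else 0) + if G.ends e = s(v, v) then 1 else 0) := by
    intro v
    rw [sum_add_distrib, ← card_filter, ← card_filter, degIn, ← Set.ncard_coe_finset,
      ← Set.ncard_coe_finset]
    simp
  rw [sum_congr rfl fun v _ => hdeg v, sum_comm]
  simp [Sym2.sum_ite_mem_add_ite_diag_eq_two, Set.ncard_eq_toFinset_card', mul_comm]

section Incidence

variable [Fintype E] {v : V}

variable (G) in
noncomputable def incidenceFinset (v : V) : Finset E := {e | v ∈ G.ends e}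

lemma mem_incidenceFinset {e : E} : e ∈ G.incidenceFinset v ↔ v ∈ G.ends e := by
  simp [incidenceFinset]

lemma card_filter_incidenceFinset_le_degIn (F : Set E) :
    ((G.incidenceFinset v).filter (· ∈ F)).card ≤ G.degIn F v := by
  have : ((G.incidenceFinset v).filter (· ∈ F) : Set E) = {e ∈ F | v ∈ G.ends e} := by
    ext e; simp [mem_incidenceFinset, and_comm]
  rw [← Set.ncard_coe_finset, this]
  exact Nat.le_add_right _ _

lemma card_incidenceFinset_le_degree : (G.incidenceFinset v).card ≤ G.degree v := by
  simpa [degree] using card_filter_incidenceFinset_le_degIn (G := G) (v := v) Set.univ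

lemma eq_or_eq_or_eq_of_not_isBranch (hv : ¬ G.IsBranch v) {x y z : E} (hx : v ∈ G.ends x)
    (hy : v ∈ G.ends y) (hz : v ∈ G.ends z) : x = y ∨ x = z ∨ y = z := by
  by_contra! h
  have h₃ : 2 < (G.incidenceFinset v).card := two_lt_card_iff.2
    ⟨x, y, z, mem_incidenceFinset.2 hx, mem_incidenceFinset.2 hy, mem_incidenceFinset.2 hz, h⟩
  have := card_incidenceFinset_le_degree (G := G) (v := v)
  exact hv (by unfold IsBranch; omega)

lemma Aut.smul_eq_of_card_incidenceFinset_le (f : G.Aut) (hfv : f • v = v) {S : Finset E}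
    (hS : S ⊆ G.incidenceFinset v) (hfS : ∀ e ∈ S, f • e = e)
    (hcard : (G.incidenceFinset v).card ≤ S.card + 1) {e : E} (he : v ∈ G.ends e) :
    f • e = e := by
  by_contra hne
  have heS : e ∉ S := fun h => hne (hfS e h)
  have hfe : v ∈ G.ends (f • e) := hfv ▸ f.smul_mem_ends_smul_iff.2 he
  have hfeS : f • e ∉ S := fun h => hne (smul_left_cancel f (hfS _ h))
  have hsd : (G.incidenceFinset v \ S).card ≤ 1 := by
    rw [card_sdiff_of_subset hS]; omega
  exact hne (card_le_one.1 hsd _ (by simp [mem_incidenceFinset, hfe, hfeS]) _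
    (by simp [mem_incidenceFinset, he, heS]))

/-- Fixing the vertices and edges around branch vertices propagates along the chains, since a
vertex of degree two has at most one incident edge besides the one it was reached through. -/
lemma Aut.eq_one_of_fixes_branch (hconn : G.Connected) {b : V} (hb : G.IsBranch b) (f : G.Aut)
    (h : ∀ v, G.IsBranch v → f • v = v ∧ ∀ e, v ∈ G.ends e → f • e = e) : f = 1 := by
  have hstep : ∀ u w, f • u = u ∧ (∀ e, u ∈ G.ends e → f • e = e) → G.Adj u w →
      f • w = w ∧ ∀ e, w ∈ G.ends e → f • e = e := by
    rintro u w ⟨hfu, hfe⟩ ⟨y, hy⟩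
    have hfy := hfe y (hy ▸ Sym2.mem_mk_left u w)
    have hfw : f • w = w := by
      have := f.ends_smul y
      rw [hfy, hy, Sym2.map_mk, hfu] at this
      exact (Sym2.congr_right.1 this).symm
    by_cases hw : G.IsBranch w
    · exact h w hw
    refine ⟨hfw, fun e he => f.smul_eq_of_card_incidenceFinset_le hfw (S := {y}) ?_ ?_ ?_ he⟩
    · exact singleton_subset_iff.2 (mem_incidenceFinset.2 (hy ▸ Sym2.mem_mk_right u w))
    · simpa using hfy
    · have := card_incidenceFinset_le_degree (G := G) (v := w)
      unfold IsBranch at hw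
      simp only [card_singleton]
      omega
  have hall : ∀ v, f • v = v ∧ ∀ e, v ∈ G.ends e → f • e = e := fun v => by
    induction hconn.2 b v with
    | refl => exact h b hb
    | tail _ hadj ih => exact hstep _ _ ih hadj
  ext x
  · exact (hall x).1
  · exact (hall _).2 x (Sym2.out_fst_mem (G.ends x))

end Incidence

variable (G) in
def Linked (e e' : E) : Prop := ∃ v, ¬ G.IsBranch v ∧ v ∈ G.ends e ∧ v ∈ G.ends e'

variable (G) in
/-- The classes of `Chain` are the maximal trails whose inner vertices have degree two, that is,
the subdivided edges of the graph obtained by suppressing the vertices of degree two. -/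
def Chain : E → E → Prop := ReflTransGen G.Linked

variable (G) in
def chainClass (e : E) : Set E := {e' | G.Chain e e'}

lemma Linked.symm {e e' : E} (h : G.Linked e e') : G.Linked e' e :=
  let ⟨v, hv, he, he'⟩ := h; ⟨v, hv, he', he⟩

lemma Chain.refl (e : E) : G.Chain e e := ReflTransGen.refl

lemma Chain.trans {x y z : E} (h : G.Chain x y) (h' : G.Chain y z) : G.Chain x z :=
  ReflTransGen.trans h h'

lemma Chain.symm {x y : E} (h : G.Chain x y) : G.Chain y x := by
  induction h with
  | refl => exact Chain.refl _
  | tail _ hl ih => exact (ReflTransGen.single hl.symm).trans ih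

lemma chain_of_not_isBranch {x y : E} {v : V} (hv : ¬ G.IsBranch v) (hx : v ∈ G.ends x)
    (hy : v ∈ G.ends y) : G.Chain x y :=
  ReflTransGen.single ⟨v, hv, hx, hy⟩

lemma mem_chainClass_self (e : E) : e ∈ G.chainClass e := Chain.refl e

lemma disjoint_chainClass {x y : E} (h : ¬ G.Chain x y) :
    Disjoint (G.chainClass x) (G.chainClass y) :=
  Set.disjoint_left.2 fun _ hx hy => h (hx.trans hy.symm)

lemma Aut.linked_smul (f : G.Aut) {x y : E} (h : G.Linked x y) : G.Linked (f • x) (f • y) :=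
  let ⟨v, hv, hx, hy⟩ := h
  ⟨f • v, (isBranch_smul_iff f).not.2 hv, f.smul_mem_ends_smul_iff.2 hx,
    f.smul_mem_ends_smul_iff.2 hy⟩

lemma Aut.chain_smul (f : G.Aut) {x y : E} (h : G.Chain x y) : G.Chain (f • x) (f • y) :=
  ReflTransGen.lift (f • ·) (fun _ _ => f.linked_smul) _ _ h

lemma Aut.chainClass_smul (f : G.Aut) (e : E) : G.chainClass (f • e) = f • G.chainClass e := by
  ext x
  rw [Set.mem_smul_set_iff_inv_smul_mem]
  refine ⟨fun h => ?_, fun h => ?_⟩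
  · change G.Chain e (f⁻¹ • x)
    simpa using f⁻¹.chain_smul (show G.Chain (f • e) x from h)
  · change G.Chain (f • e) x
    simpa using f.chain_smul (show G.Chain e (f⁻¹ • x) from h)

lemma degIn_chainClass_add_le [Finite E] {x y : E} (h : ¬ G.Chain x y) (v : V) :
    G.degIn (G.chainClass x) v + G.degIn (G.chainClass y) v ≤ G.degree v := by
  rw [← degIn_union (disjoint_chainClass h)]
  exact degIn_le_degree

variable (G) in
def chainGraph (e : E) : SimpleGraph (G.chainClass e) where
  Adj x y := x ≠ y ∧ G.Linked x y
  symm := ⟨fun _ _ h => ⟨h.1.symm, h.2.symm⟩⟩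
  loopless := ⟨fun _ h => h.1 rfl⟩

lemma chainGraph_connected (e : E) : (G.chainGraph e).Connected := by
  have hroot : ∀ x (hx : G.Chain e x),
      (G.chainGraph e).Reachable ⟨e, Chain.refl e⟩ ⟨x, hx⟩ := by
    intro x hx
    induction hx with
    | refl => rfl
    | tail hy hl ih =>
      refine ih.trans ?_
      by_cases h : (⟨_, hy⟩ : G.chainClass e) = ⟨_, hy.tail hl⟩
      · rw [h]
      · exact SimpleGraph.Adj.reachable (G := G.chainGraph e) ⟨h, hl⟩
  have : Nonempty (G.chainClass e) := ⟨⟨e, Chain.refl e⟩⟩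
  exact ⟨fun x y => (hroot x x.2).symm.trans (hroot y y.2)⟩

section Chains

variable [Fintype V]

variable (G) in
noncomputable def branchFinset : Finset V := {v | G.IsBranch v}

lemma mem_branchFinset {v : V} : v ∈ G.branchFinset ↔ G.IsBranch v := by
  simp [branchFinset]

lemma isBranch_iff_of_branchFinset_eq_pair {a b : V} (hB : G.branchFinset = {a, b}) {v : V} :
    G.IsBranch v ↔ v = a ∨ v = b := by
  rw [← mem_branchFinset, hB, mem_insert, mem_singleton]

lemma Aut.smul_eq_of_branchFinset_eq_pair {a b : V} (hab : a ≠ b) (hB : G.branchFinset = {a, b})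
    (f : G.Aut) (hfa : f • a = a) {v : V} (hv : G.IsBranch v) : f • v = v := by
  have hbr {u : V} : G.IsBranch u ↔ u = a ∨ u = b := isBranch_iff_of_branchFinset_eq_pair hB
  rcases hbr.1 hv with rfl | rfl
  · exact hfa
  rcases hbr.1 ((isBranch_smul_iff f).2 hv) with h | h
  · exact absurd (smul_left_cancel f (h.trans hfa.symm)) hab.symm
  · exact h

variable (G) in
noncomputable def innerFinset (e : E) : Finset V :=
  {v | ¬ G.IsBranch v ∧ ∃ x ∈ G.chainClass e, v ∈ G.ends x}

lemma mem_innerFinset {e : E} {v : V} :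
    v ∈ G.innerFinset e ↔ ¬ G.IsBranch v ∧ ∃ x ∈ G.chainClass e, v ∈ G.ends x := by
  simp [innerFinset]

variable [Fintype E]

/-- Distinct linked edges of a chain share an inner vertex, and an inner vertex is shared by at
most one such pair, so the connected graph `chainGraph e` has at most as many edges as the chain
has inner vertices. -/
lemma ncard_chainClass_le (e : E) : (G.chainClass e).ncard ≤ (G.innerFinset e).card + 1 := by
  have hlink : ∀ s ∈ (G.chainGraph e).edgeSet, ∃ v, ¬ G.IsBranch v ∧ ∀ x ∈ s, v ∈ G.ends x := by
    intro s hs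
    induction s using Sym2.ind with
    | _ x y =>
      obtain ⟨-, v, hv, hx, hy⟩ := (show (G.chainGraph e).Adj x y from hs)
      exact ⟨v, hv, fun z hz => by rcases Sym2.mem_iff.1 hz with rfl | rfl <;> assumption⟩
  have : Nonempty V := ⟨(G.ends e).out.1⟩
  choose! φ hφ using hlink
  have hmaps : ∀ s : (G.chainGraph e).edgeSet, φ s ∈ G.innerFinset e := by
    rintro ⟨s, hs⟩
    induction s using Sym2.ind with
    | _ x y => exact mem_innerFinset.2 ⟨(hφ _ hs).1, x, x.2, (hφ _ hs).2 x (by simp)⟩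
  have hinj : Function.Injective fun s : (G.chainGraph e).edgeSet =>
      (⟨φ s, hmaps s⟩ : G.innerFinset e) := by
    rintro ⟨s, hs⟩ ⟨t, ht⟩ h
    obtain ⟨hv, hinc⟩ := hφ s hs
    have hinc' := (hφ t ht).2
    simp only [Subtype.mk.injEq] at h
    rw [← h] at hinc'
    refine Subtype.ext <| Sym2.eq_of_not_isDiag_of_forall_mem
      (P := fun z : G.chainClass e => φ s ∈ G.ends z) (fun x y z hx hy hz => by
        simpa only [Subtype.ext_iff] using eq_or_eq_or_eq_of_not_isBranch hv hx hy hz)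
      ((G.chainGraph e).not_isDiag_of_mem_edgeSet hs)
      ((G.chainGraph e).not_isDiag_of_mem_edgeSet ht) hinc hinc'
  calc (G.chainClass e).ncard = Nat.card (G.chainClass e) := (Nat.card_coe_set_eq _).symm
    _ ≤ Nat.card (G.chainGraph e).edgeSet + 1 :=
      (chainGraph_connected e).card_vert_le_card_edgeSet_add_one
    _ ≤ Nat.card (G.innerFinset e) + 1 := by gcongr; exact Nat.card_le_card_of_injective _ hinj
    _ = (G.innerFinset e).card + 1 := by simp

lemma sum_degIn_chainClass_add (hleaf : G.Leafless) (e : E) :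
    ∑ v ∈ G.branchFinset, G.degIn (G.chainClass e) v + 2 * (G.innerFinset e).card =
      2 * (G.chainClass e).ncard := by
  have hsub : G.innerFinset e ⊆ univ.filter (¬ G.IsBranch ·) := fun v hv =>
    mem_filter.2 ⟨mem_univ v, (mem_innerFinset.1 hv).1⟩
  have hzero : ∀ v ∈ univ.filter (¬ G.IsBranch ·), v ∉ G.innerFinset e →
      G.degIn (G.chainClass e) v = 0 := fun v hv hvI =>
    degIn_eq_zero fun x hx hvx => hvI (mem_innerFinset.2 ⟨(mem_filter.1 hv).2, x, hx, hvx⟩)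
  have htwo : ∀ v ∈ G.innerFinset e, G.degIn (G.chainClass e) v = 2 := by
    intro v hv
    obtain ⟨hvb, x, hx, hvx⟩ := mem_innerFinset.1 hv
    rw [degIn_eq_degree (F := G.chainClass e) fun y hvy =>
      Chain.trans hx (chain_of_not_isBranch hvb hvx hvy)]
    have := hleaf v
    unfold IsBranch at hvb
    omega
  rw [← G.sum_degIn, ← sum_filter_add_sum_filter_not univ G.IsBranch,
    ← sum_subset hsub hzero, sum_congr rfl htwo, sum_const, smul_eq_mul, mul_comm]
  rfl

lemma exists_isBranch_degIn_chainClass_pos (hconn : G.Connected) {b : V} (hb : G.IsBranch b)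
    (e : E) : ∃ v ∈ G.branchFinset, 0 < G.degIn (G.chainClass e) v := by
  by_contra! h
  have hnb : ∀ v, ∀ x ∈ G.chainClass e, v ∈ G.ends x → ¬ G.IsBranch v := fun v x hx hvx hv =>
    (degIn_pos hx hvx).ne' (Nat.le_zero.1 (h v (mem_branchFinset.2 hv)))
  obtain ⟨p, hp⟩ : ∃ p, p ∈ G.ends e := ⟨(G.ends e).out.1, Sym2.out_fst_mem _⟩
  have hreach : ∀ u, ReflTransGen G.Adj p u → ∃ x ∈ G.chainClass e, u ∈ G.ends x := by
    intro u hu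
    induction hu with
    | refl => exact ⟨e, Chain.refl e, hp⟩
    | tail _ hadj ih =>
      obtain ⟨x, hx, hux⟩ := ih
      obtain ⟨y, hy⟩ := hadj
      have huy : _ ∈ G.ends y := hy ▸ Sym2.mem_mk_left _ _
      exact ⟨y, Chain.trans hx (chain_of_not_isBranch (hnb _ x hx hux) hux huy),
        hy ▸ Sym2.mem_mk_right _ _⟩
  obtain ⟨x, hx, hbx⟩ := hreach b (hconn.2 p b)
  exact hnb b x hx hbx hb

theorem sum_degIn_chainClass (hconn : G.Connected) (hleaf : G.Leafless) {b : V}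
    (hb : G.IsBranch b) (e : E) : ∑ v ∈ G.branchFinset, G.degIn (G.chainClass e) v = 2 := by
  have hsum := sum_degIn_chainClass_add hleaf e
  have hcard := ncard_chainClass_le (G := G) e
  obtain ⟨v, hv, hpos⟩ := exists_isBranch_degIn_chainClass_pos hconn hb e
  have := single_le_sum (fun v _ => Nat.zero_le (G.degIn (G.chainClass e) v)) hv
  omega

variable (G) in
noncomputable def chainEnds (e : E) : Finset (V × E) :=
  {p | G.IsBranch p.1 ∧ G.Chain e p.2 ∧ p.1 ∈ G.ends p.2}

lemma mem_chainEnds {e : E} {p : V × E} :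
    p ∈ G.chainEnds e ↔ G.IsBranch p.1 ∧ G.Chain e p.2 ∧ p.1 ∈ G.ends p.2 := by
  simp [chainEnds]

lemma card_chainEnds_le (hconn : G.Connected) (hleaf : G.Leafless) {b : V} (hb : G.IsBranch b)
    (e : E) : (G.chainEnds e).card ≤ 2 := by
  have hfiber : ∀ v ∈ G.branchFinset,
      ((G.chainEnds e).filter (·.1 = v)).card ≤ G.degIn (G.chainClass e) v := by
    intro v _
    refine (card_le_card_of_injOn Prod.snd (fun p hp => ?_) fun p hp q hq h => ?_).trans
      (card_filter_incidenceFinset_le_degIn _)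
    · obtain ⟨hpe, rfl⟩ := mem_filter.1 (mem_coe.1 hp)
      obtain ⟨-, hc, hv⟩ := mem_chainEnds.1 hpe
      exact mem_coe.2 (mem_filter.2 ⟨mem_incidenceFinset.2 hv, hc⟩)
    · exact Prod.ext ((mem_filter.1 (mem_coe.1 hp)).2.trans (mem_filter.1 (mem_coe.1 hq)).2.symm)
        h
  rw [card_eq_sum_card_fiberwise fun p hp => mem_branchFinset.2 (mem_chainEnds.1 hp).1]
  exact (sum_le_sum hfiber).trans (sum_degIn_chainClass hconn hleaf hb e).le

lemma Aut.smul_eq_of_chain (hconn : G.Connected) (hleaf : G.Leafless) (f : G.Aut) {v v' : V}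
    {x y : E} (hv : G.IsBranch v)
    (hvx : v ∈ G.ends x) (hv' : G.IsBranch v') (hv'y : v' ∈ G.ends y) (hxy : G.Chain x y)
    (hfv : f • v = v) (hfx : f • x = x) : f • v' = v' ∧ f • y = y := by
  have hp : (v, x) ∈ G.chainEnds x := mem_chainEnds.2 ⟨hv, Chain.refl x, hvx⟩
  have hq : (v', y) ∈ G.chainEnds x := mem_chainEnds.2 ⟨hv', hxy, hv'y⟩
  have hfq : f • (v', y) ∈ G.chainEnds x := mem_chainEnds.2
    ⟨(isBranch_smul_iff f).2 hv', hfx ▸ f.chain_smul hxy, f.smul_mem_ends_smul_iff.2 hv'y⟩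
  have hfp : f • (v, x) = (v, x) := by rw [Prod.smul_mk, hfv, hfx]
  suffices f • (v', y) = (v', y) by simpa [Prod.ext_iff] using this
  by_contra hne
  have hqp : (v', y) ≠ (v, x) := fun h => hne (h ▸ hfp)
  have hfqp : f • (v', y) ≠ (v, x) := fun h => hqp (smul_left_cancel f (h.trans hfp.symm))
  exact (card_chainEnds_le hconn hleaf hv x).not_gt
    (two_lt_card_iff.2 ⟨_, _, _, hp, hq, hfq, hqp.symm, hfqp.symm, Ne.symm hne⟩)

/-- The edges at a branch vertex `v` off the chains of `x₁` and `x₂` number at most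
`degree v - degIn (chainClass x₁) v - degIn (chainClass x₂) v`, so `hdeg` leaves at most one
of them, which is then fixed along with the others. -/
lemma Aut.eq_one_of_fixes_two_chains (hconn : G.Connected) (hleaf : G.Leafless) (f : G.Aut)
    (hB : ∀ v, G.IsBranch v → f • v = v) {v₁ v₂ : V} {x₁ x₂ : E} (hv₁ : G.IsBranch v₁)
    (hx₁ : v₁ ∈ G.ends x₁) (hv₂ : G.IsBranch v₂) (hx₂ : v₂ ∈ G.ends x₂) (h₁₂ : ¬ G.Chain x₁ x₂)
    (hf₁ : f • x₁ = x₁) (hf₂ : f • x₂ = x₂)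
    (hdeg : ∀ v, G.IsBranch v →
      G.degree v ≤ G.degIn (G.chainClass x₁) v + G.degIn (G.chainClass x₂) v + 1) :
    f = 1 := by
  refine f.eq_one_of_fixes_branch hconn hv₁ fun v hv => ⟨hB v hv, fun e he => ?_⟩
  set F := G.chainClass x₁ ∪ G.chainClass x₂
  refine f.smul_eq_of_card_incidenceFinset_le (hB v hv)
    (S := (G.incidenceFinset v).filter (· ∈ F)) (filter_subset _ _) (fun y hy => ?_) ?_ he
  · obtain ⟨hvy, hy | hy⟩ := mem_filter.1 hy
    · exact (f.smul_eq_of_chain hconn hleaf hv₁ hx₁ hv (mem_incidenceFinset.1 hvy) hy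
        (hB v₁ hv₁) hf₁).2
    · exact (f.smul_eq_of_chain hconn hleaf hv₂ hx₂ hv (mem_incidenceFinset.1 hvy) hy
        (hB v₂ hv₂) hf₂).2
  · have hcompl := card_filter_incidenceFinset_le_degIn (G := G) (v := v) Fᶜ
    have hsplit := degIn_compl_add (G := G) (v := v) F
    rw [degIn_union (disjoint_chainClass h₁₂)] at hsplit
    have := card_filter_add_card_filter_not (s := G.incidenceFinset v) (· ∈ F)
    simp only [Set.mem_compl_iff] at hcompl
    have := hdeg v hv
    omega

end Chains

section Counting

variable [Fintype V] [Fintype E]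

variable (G) in
noncomputable def branchFlagPairs : Finset (V × E × E) :=
  {t | G.IsBranch t.1 ∧ t.1 ∈ G.ends t.2.1 ∧ t.1 ∈ G.ends t.2.2 ∧ t.2.1 ≠ t.2.2}

lemma mem_branchFlagPairs {t : V × E × E} : t ∈ G.branchFlagPairs ↔
    G.IsBranch t.1 ∧ t.1 ∈ G.ends t.2.1 ∧ t.1 ∈ G.ends t.2.2 ∧ t.2.1 ≠ t.2.2 := by
  simp [branchFlagPairs]

lemma Aut.smul_mem_branchFlagPairs (f : G.Aut) {t : V × E × E} (ht : t ∈ G.branchFlagPairs) :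
    f • t ∈ G.branchFlagPairs := by
  obtain ⟨hb, h₁, h₂, hne⟩ := mem_branchFlagPairs.1 ht
  exact mem_branchFlagPairs.2 ⟨(isBranch_smul_iff f).2 hb, f.smul_mem_ends_smul_iff.2 h₁,
    f.smul_mem_ends_smul_iff.2 h₂, fun h => hne (smul_left_cancel f h)⟩

lemma card_branchFlagPairs_le :
    (G.branchFlagPairs).card ≤ ∑ v ∈ G.branchFinset, G.degree v * (G.degree v - 1) := by
  have hsub : G.branchFlagPairs ⊆
      G.branchFinset.biUnion fun v => {v} ×ˢ (G.incidenceFinset v).offDiag := by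
    intro t ht
    obtain ⟨hb, h₁, h₂, hne⟩ := mem_branchFlagPairs.1 ht
    exact mem_biUnion.2 ⟨t.1, mem_branchFinset.2 hb, by
      simp [mem_incidenceFinset, h₁, h₂, hne]⟩
  refine (card_le_card hsub).trans (card_biUnion_le.trans (sum_le_sum fun v _ => ?_))
  have h := card_incidenceFinset_le_degree (G := G) (v := v)
  rw [card_product, card_singleton, one_mul, offDiag_card, ← Nat.mul_sub_one]
  exact Nat.mul_le_mul h (Nat.sub_le_sub_right h 1)

lemma card_aut_le_of_branchFinset_eq_singleton (hconn : G.Connected) (hleaf : G.Leafless)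
    {w : V} (hw : G.degree w = 4) (hB : G.branchFinset = {w}) : Nat.card G.Aut ≤ 12 := by
  have hwb : G.IsBranch w := mem_branchFinset.1 (hB ▸ mem_singleton_self w)
  have hcls : ∀ e, G.degIn (G.chainClass e) w = 2 := fun e => by
    simpa [hB] using sum_degIn_chainClass hconn hleaf hwb e
  have hfix : ∀ (f : G.Aut) v, G.IsBranch v → f • v = v := fun f v hv => by
    have h := fun u (hu : G.IsBranch u) => mem_singleton.1 (hB ▸ mem_branchFinset.2 hu)
    rw [h v hv, h _ ((isBranch_smul_iff f).2 hwb)]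
  obtain ⟨x, hx, -⟩ := exists_mem_ends_notMem (F := ∅) (G := G) (v := w)
    (by rw [degIn_eq_zero (by simp)]; omega)
  obtain ⟨y, hy, hxy⟩ := exists_mem_ends_notMem (G := G) (F := G.chainClass x) (v := w)
    (by rw [hcls, hw]; omega)
  have hrigid : ∀ f : G.Aut, f • (w, x, y) = (w, x, y) → f = 1 := fun f hf => by
    simp only [Prod.smul_mk, Prod.mk.injEq] at hf
    refine f.eq_one_of_fixes_two_chains hconn hleaf (hfix f) hwb hx hwb hy hxy hf.2.1 hf.2.2
      fun v hv => ?_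
    rw [show v = w from mem_singleton.1 (hB ▸ mem_branchFinset.2 hv), hcls, hcls, hw]
    norm_num
  have hflag : (w, x, y) ∈ G.branchFlagPairs :=
    mem_branchFlagPairs.2 ⟨hwb, hx, hy, fun h : x = y => hxy (h ▸ Chain.refl x)⟩
  calc Nat.card G.Aut ≤ G.branchFlagPairs.card :=
        MulAction.natCard_le_card_of_smul_mem (fun f => f.smul_mem_branchFlagPairs hflag) hrigid
    _ ≤ 12 := card_branchFlagPairs_le.trans (by simp [hB, hw])

lemma degIn_chainClass_add_eq_two (hconn : G.Connected) (hleaf : G.Leafless) {a b : V}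
    (hab : a ≠ b) (hB : G.branchFinset = {a, b}) (e : E) :
    G.degIn (G.chainClass e) a + G.degIn (G.chainClass e) b = 2 := by
  have ha : G.IsBranch a := (isBranch_iff_of_branchFinset_eq_pair hB).2 (.inl rfl)
  simpa [hB, sum_pair hab] using sum_degIn_chainClass hconn hleaf ha e

lemma Aut.smul_eq_of_degIn_chainClass_eq_zero {a b : V} (hB : G.branchFinset = {a, b})
    (f : G.Aut) {c : E} (hfc : f • c = c) (hc : a ∈ G.ends c)
    (hcb : G.degIn (G.chainClass c) b = 0) : f • a = a := by
  have hfa : f • a ∈ G.ends c := hfc ▸ f.smul_mem_ends_smul_iff.2 hc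
  have ha : G.IsBranch a := (isBranch_iff_of_branchFinset_eq_pair hB).2 (.inl rfl)
  rcases (isBranch_iff_of_branchFinset_eq_pair hB).1 ((isBranch_smul_iff f).2 ha) with h | h
  · exact h
  · exact absurd hcb (degIn_pos (mem_chainClass_self c) (h ▸ hfa)).ne'

lemma card_aut_le_of_theta (hconn : G.Connected) (hleaf : G.Leafless) {a b : V} (hab : a ≠ b)
    (ha : G.degree a = 3) (hb : G.degree b = 3) (hB : G.branchFinset = {a, b})
    (htheta : ∀ x, a ∈ G.ends x → G.degIn (G.chainClass x) a ≤ 1) : Nat.card G.Aut ≤ 12 := by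
  have hbr {v : V} : G.IsBranch v ↔ v = a ∨ v = b := isBranch_iff_of_branchFinset_eq_pair hB
  have hcls := degIn_chainClass_add_eq_two hconn hleaf hab hB
  obtain ⟨x, hx, -⟩ := exists_mem_ends_notMem (F := ∅) (G := G) (v := a)
    (by rw [degIn_eq_zero (by simp)]; omega)
  obtain ⟨y, hy, hxy⟩ := exists_mem_ends_notMem (G := G) (F := G.chainClass x) (v := a)
    (by have := htheta x hx; omega)
  have hxa : 0 < G.degIn (G.chainClass x) a := degIn_pos (mem_chainClass_self x) hx
  have hya : 0 < G.degIn (G.chainClass y) a := degIn_pos (mem_chainClass_self y) hy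
  have := htheta x hx
  have := htheta y hy
  have := hcls x
  have := hcls y
  have hrigid : ∀ f : G.Aut, f • (a, x, y) = (a, x, y) → f = 1 := fun f hf => by
    simp only [Prod.smul_mk, Prod.mk.injEq] at hf
    refine f.eq_one_of_fixes_two_chains hconn hleaf
      (fun v => f.smul_eq_of_branchFinset_eq_pair hab hB hf.1) (hbr.2 (.inl rfl)) hx
      (hbr.2 (.inl rfl)) hy hxy hf.2.1 hf.2.2 fun v hv => ?_
    rcases hbr.1 hv with rfl | rfl <;> omega
  have hflag : (a, x, y) ∈ G.branchFlagPairs :=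
    mem_branchFlagPairs.2 ⟨hbr.2 (.inl rfl), hx, hy, fun h : x = y => hxy (h ▸ Chain.refl x)⟩
  calc Nat.card G.Aut ≤ G.branchFlagPairs.card :=
        MulAction.natCard_le_card_of_smul_mem (fun f => f.smul_mem_branchFlagPairs hflag) hrigid
    _ ≤ 12 := card_branchFlagPairs_le.trans (by simp [hB, sum_pair hab, ha, hb])

variable (G) in
/-- Edges at a branch vertex whose chain returns to that vertex. -/
noncomputable def closedChainEdges : Finset E :=
  {e | ∃ v, G.IsBranch v ∧ v ∈ G.ends e ∧ G.degIn (G.chainClass e) v = 2}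

lemma mem_closedChainEdges {e : E} : e ∈ G.closedChainEdges ↔
    ∃ v, G.IsBranch v ∧ v ∈ G.ends e ∧ G.degIn (G.chainClass e) v = 2 := by
  simp [closedChainEdges]

lemma Aut.smul_mem_closedChainEdges (f : G.Aut) {e : E} (he : e ∈ G.closedChainEdges) :
    f • e ∈ G.closedChainEdges := by
  obtain ⟨v, hv, hve, hdeg⟩ := mem_closedChainEdges.1 he
  exact mem_closedChainEdges.2 ⟨f • v, (isBranch_smul_iff f).2 hv, f.smul_mem_ends_smul_iff.2 hve,
    by rw [f.chainClass_smul, degIn_smul, hdeg]⟩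

lemma card_closedChainEdges_le (hconn : G.Connected) (hleaf : G.Leafless) {a b : V}
    (hab : a ≠ b) (ha : G.degree a = 3) (hb : G.degree b = 3) (hB : G.branchFinset = {a, b})
    {c c' : E} (hca : G.degIn (G.chainClass c) a = 2) (hcb : G.degIn (G.chainClass c') b = 2) :
    G.closedChainEdges.card ≤ 4 := by
  have hsub : G.closedChainEdges ⊆ (G.incidenceFinset a).filter (· ∈ G.chainClass c) ∪
      (G.incidenceFinset b).filter (· ∈ G.chainClass c') := by
    intro e he
    obtain ⟨v, hv, hve, hdeg⟩ := mem_closedChainEdges.1 he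
    rcases (isBranch_iff_of_branchFinset_eq_pair hB).1 hv with rfl | rfl
    · refine mem_union_left _ (mem_filter.2 ⟨mem_incidenceFinset.2 hve, by_contra fun h => ?_⟩)
      have := degIn_chainClass_add_le h v
      have := degIn_chainClass_add_eq_two hconn hleaf hab hB c
      omega
    · refine mem_union_right _ (mem_filter.2 ⟨mem_incidenceFinset.2 hve, by_contra fun h => ?_⟩)
      have := degIn_chainClass_add_le h v
      have := degIn_chainClass_add_eq_two hconn hleaf hab hB c'
      omega
  have h₁ := card_filter_incidenceFinset_le_degIn (G := G) (v := a) (G.chainClass c)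
  have h₂ := card_filter_incidenceFinset_le_degIn (G := G) (v := b) (G.chainClass c')
  have := (card_le_card hsub).trans (card_union_le _ _)
  omega

lemma card_aut_le_of_dumbbell (hconn : G.Connected) (hleaf : G.Leafless) {a b : V} (hab : a ≠ b)
    (ha : G.degree a = 3) (hb : G.degree b = 3) (hB : G.branchFinset = {a, b}) {c c' : E}
    (hc : a ∈ G.ends c)
    (hca : G.degIn (G.chainClass c) a = 2) (hc' : b ∈ G.ends c')
    (hcb : G.degIn (G.chainClass c') b = 2) : Nat.card G.Aut ≤ 12 := by
  have hbr {v : V} : G.IsBranch v ↔ v = a ∨ v = b := isBranch_iff_of_branchFinset_eq_pair hB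
  have hcls := degIn_chainClass_add_eq_two hconn hleaf hab hB
  have hcb₀ : G.degIn (G.chainClass c) b = 0 := by have := hcls c; omega
  have hca₀ : G.degIn (G.chainClass c') a = 0 := by have := hcls c'; omega
  have hcc' : ¬ G.Chain c c' := fun h => (degIn_pos h hc').ne' hcb₀
  have hrigid : ∀ f : G.Aut, f • (c, c') = (c, c') → f = 1 := fun f hf => by
    simp only [Prod.smul_mk, Prod.mk.injEq] at hf
    have hfa := f.smul_eq_of_degIn_chainClass_eq_zero hB hf.1 hc hcb₀
    refine f.eq_one_of_fixes_two_chains hconn hleaf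
      (fun v => f.smul_eq_of_branchFinset_eq_pair hab hB hfa) (hbr.2 (.inl rfl)) hc
      (hbr.2 (.inr rfl)) hc' hcc' hf.1 hf.2 fun v hv => ?_
    rcases hbr.1 hv with rfl | rfl <;> omega
  have hmem : (c, c') ∈ G.closedChainEdges.offDiag := mem_offDiag.2
    ⟨mem_closedChainEdges.2 ⟨a, hbr.2 (.inl rfl), hc, hca⟩,
      mem_closedChainEdges.2 ⟨b, hbr.2 (.inr rfl), hc', hcb⟩,
      fun h : c = c' => hcc' (h ▸ Chain.refl c)⟩
  have hcard := card_closedChainEdges_le hconn hleaf hab ha hb hB hca hcb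
  calc Nat.card G.Aut ≤ G.closedChainEdges.offDiag.card :=
        MulAction.natCard_le_card_of_smul_mem (fun f => mem_offDiag.2
          ⟨f.smul_mem_closedChainEdges (mem_offDiag.1 hmem).1,
            f.smul_mem_closedChainEdges (mem_offDiag.1 hmem).2.1,
            fun h => (mem_offDiag.1 hmem).2.2 (smul_left_cancel f h)⟩) hrigid
    _ ≤ 4 * (4 - 1) := by
      rw [offDiag_card, ← Nat.mul_sub_one]
      exact Nat.mul_le_mul hcard (Nat.sub_le_sub_right hcard 1)

lemma card_aut_le_of_branchFinset_eq_pair (hconn : G.Connected) (hleaf : G.Leafless) {a b : V}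
    (hab : a ≠ b) (ha : G.degree a = 3) (hb : G.degree b = 3) (hB : G.branchFinset = {a, b}) :
    Nat.card G.Aut ≤ 12 := by
  by_cases hta : ∀ x, a ∈ G.ends x → G.degIn (G.chainClass x) a ≤ 1
  · exact card_aut_le_of_theta hconn hleaf hab ha hb hB hta
  by_cases htb : ∀ x, b ∈ G.ends x → G.degIn (G.chainClass x) b ≤ 1
  · exact card_aut_le_of_theta hconn hleaf hab.symm hb ha (by rw [hB, pair_comm]) htb
  push Not at hta htb
  obtain ⟨c, hc, hca⟩ := hta
  obtain ⟨c', hc', hcb⟩ := htb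
  have hcls := degIn_chainClass_add_eq_two hconn hleaf hab hB
  have := hcls c
  have := hcls c'
  exact card_aut_le_of_dumbbell hconn hleaf hab ha hb hB hc (by omega) hc' (by omega)

lemma sum_branchFinset_degree_sub_two (hleaf : G.Leafless)
    (hbetti : Fintype.card E + 1 = Fintype.card V + 2) :
    ∑ v ∈ G.branchFinset, (G.degree v - 2) = 2 := by
  have hdeg : ∑ v, G.degree v = 2 * Fintype.card E := by
    simpa [degree, Set.ncard_univ, Nat.card_eq_fintype_card] using G.sum_degIn Set.univ
  have hsplit : ∑ v, (G.degree v - 2) + ∑ _v : V, 2 = ∑ v, G.degree v := by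
    rw [← sum_add_distrib]
    exact sum_congr rfl fun v _ => Nat.sub_add_cancel (hleaf v)
  rw [branchFinset, sum_filter_of_ne fun v _ h => by unfold IsBranch; omega]
  simp only [sum_const, card_univ, smul_eq_mul] at hsplit
  omega

variable (G) in
lemma branchFinset_eq_singleton_or_pair (hleaf : G.Leafless)
    (hbetti : Fintype.card E + 1 = Fintype.card V + 2) :
    (∃ w, G.degree w = 4 ∧ G.branchFinset = {w}) ∨
      ∃ a b, a ≠ b ∧ G.degree a = 3 ∧ G.degree b = 3 ∧ G.branchFinset = {a, b} := by
  have hexcess := sum_branchFinset_degree_sub_two hleaf hbetti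
  have hge : ∀ v ∈ G.branchFinset, 1 ≤ G.degree v - 2 := fun v hv => by
    have := mem_branchFinset.1 hv; unfold IsBranch at this; omega
  have hcard : G.branchFinset.card ≤ 2 := by
    simpa [hexcess] using card_nsmul_le_sum _ _ 1 hge
  interval_cases h : G.branchFinset.card
  · simp_all
  · obtain ⟨w, hw⟩ := card_eq_one.1 h
    have := hge w (by simp [hw])
    rw [hw, sum_singleton] at hexcess
    exact .inl ⟨w, by omega, hw⟩
  · obtain ⟨a, b, hab, hB⟩ := card_eq_two.1 h
    have := hge a (by simp [hB])
    have := hge b (by simp [hB])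
    rw [hB, sum_pair hab] at hexcess
    exact .inr ⟨a, b, hab, by omega, by omega, hB⟩

end Counting

end Multigraph

/-- A connected leafless graph of Betti number `2` has at most
`12` automorphisms.  (The Betti number of a connected graph is `#E - #V + 1`,
expressed here additively as `#E + 1 = #V + 2`.) -/
theorem aut_card_le_of_betti_eq_two {V E : Type} [Fintype V] [Fintype E]
    (G : Multigraph V E)
    (hconn : G.Connected) (hleaf : G.Leafless)
    (hbetti : Fintype.card E + 1 = Fintype.card V + 2) :
    Nat.card G.Aut ≤ 12 := by
  rcases G.branchFinset_eq_singleton_or_pair hleaf hbetti with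
    ⟨w, hw, hB⟩ | ⟨a, b, hab, ha, hb, hB⟩
  · exact Multigraph.card_aut_le_of_branchFinset_eq_singleton hconn hleaf hw hB
  · exact Multigraph.card_aut_le_of_branchFinset_eq_pair hconn hleaf hab ha hb hB
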